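/- arXiv:1509.03608 — 6 statements merged into one kernel-verified Lean document; each statement's English description precedes it below -/
import Mathlib

section
/- Fix d ≥ 1 and let g ∈ SL(d+1, ℂ). Then g fixes the hyperplane H pointwise if and only if there exist t ∈ ℂˣ and s : Fin d → ℂ such that: g 0 0 = (t⁻¹)^d, g 0 (Fin.succ j) = 0 for all j : Fin d, g (Fin.succ i) 0 = s i for all i : Fin d, and g (Fin.succ i) (Fin.succ j) equals t if i = j and 0 otherwise. -/
/-!
Write a vector of the hyperplane as `v = (0, w)`. Then `g v = c v` says that the first row of `g`
annihilates `w` and that the lower-right `d × d` block `B` satisfies `B w = c w`. A linear map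
for which every vector is an eigenvector is a homothety, so `B = t • 1`, and the first row
vanishes off the corner. Expanding `det g = 1` along the first row gives `g₀₀ tᵈ = 1`, so `t` is
a unit and `g₀₀ = t⁻ᵈ`.
-/

namespace Matrix

variable {R : Type*} [CommRing R]

theorem exists_eq_scalar_of_forall_exists_mulVec_eq_smul [IsDomain R] {n : Type*} [Fintype n]
    [DecidableEq n] {B : Matrix n n R} (h : ∀ v, ∃ c : R, B *ᵥ v = c • v) :
    ∃ a, B = scalar n a := by
  obtain ⟨a, ha⟩ := (toLin' B).exists_eq_smul_id_of_forall_notLinearIndependent fun v ↦ by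
    obtain ⟨c, hc⟩ := h v
    rw [LinearIndependent.pair_iff]
    push Not
    exact ⟨c, -1, by simp [hc], by simp⟩
  refine ⟨a, ?_⟩
  calc B = LinearMap.toMatrix' (toLin' B) := (LinearMap.toMatrix'_toLin' B).symm
    _ = scalar n a := by rw [ha]; exact LinearMap.toMatrix'_algebraMap a

variable {m : ℕ}

theorem mulVec_cons_zero (M : Matrix (Fin (m + 1)) (Fin (m + 1)) R) (w : Fin m → R) :
    M *ᵥ Fin.cons 0 w =
      Fin.cons ((fun j ↦ M 0 j.succ) ⬝ᵥ w) (M.submatrix Fin.succ Fin.succ *ᵥ w) := by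
  ext i
  cases i using Fin.cases <;> simp [mulVec, dotProduct, Fin.sum_univ_succ]

theorem det_eq_mul_det_submatrix_succ_of_forall_apply_zero_succ_eq_zero
    {M : Matrix (Fin (m + 1)) (Fin (m + 1)) R} (h : ∀ j : Fin m, M 0 j.succ = 0) :
    M.det = M 0 0 * (M.submatrix Fin.succ Fin.succ).det := by
  simp [det_succ_row_zero, Fin.sum_univ_succ, h]

theorem forall_exists_mulVec_eq_smul_of_apply_zero_eq_zero_iff [IsDomain R]
    (M : Matrix (Fin (m + 1)) (Fin (m + 1)) R) :
    (∀ v : Fin (m + 1) → R, v 0 = 0 → ∃ c : R, M *ᵥ v = c • v) ↔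
      (∀ j : Fin m, M 0 j.succ = 0) ∧
        ∃ a, M.submatrix Fin.succ Fin.succ = scalar (Fin m) a := by
  have eigen_iff : ∀ w (c : R), M *ᵥ Fin.cons 0 w = c • Fin.cons 0 w ↔
      (fun j ↦ M 0 j.succ) ⬝ᵥ w = 0 ∧ M.submatrix Fin.succ Fin.succ *ᵥ w = c • w := by
    intro w c
    have hsmul : c • (Fin.cons 0 w : Fin (m + 1) → R) = Fin.cons 0 (c • w) := by
      ext i; cases i using Fin.cases <;> simp
    rw [mulVec_cons_zero, hsmul, Fin.cons_inj]
  have hyperplane_iff : (∀ v : Fin (m + 1) → R, v 0 = 0 → ∃ c : R, M *ᵥ v = c • v) ↔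
      ∀ w, ∃ c : R, M *ᵥ Fin.cons 0 w = c • Fin.cons 0 w :=
    ⟨fun h w ↦ h _ rfl, fun h v hv ↦ by simpa [← hv] using h (Fin.tail v)⟩
  simp only [hyperplane_iff, eigen_iff]
  constructor
  · intro h
    refine ⟨fun j ↦ ?_, exists_eq_scalar_of_forall_exists_mulVec_eq_smul fun w ↦ ?_⟩
    · obtain ⟨c, hc, -⟩ := h (Pi.single j 1)
      simpa using hc
    · obtain ⟨c, -, hc⟩ := h w
      exact ⟨c, hc⟩
  · rintro ⟨hrow, a, ha⟩ w
    exact ⟨a, by simp [funext hrow], by simp [ha]⟩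

end Matrix

/-- An element `g ∈ SL(d+1, ℂ)` fixes the hyperplane `H = {v₀ = 0}` pointwise
(projectively) if and only if it is a lower block-triangular matrix with top-left
entry `t⁻ᵈ`, zero remaining first row, first column below given by `s : Fin d → ℂ`,
and the scalar matrix `t·Id` in the remaining `d × d` block. -/
theorem fixesHyperplane_iff_matrix_form (d : ℕ) (hd : 1 ≤ d)
    (g : Matrix.SpecialLinearGroup (Fin (d + 1)) ℂ) :
    (∀ v : Fin (d + 1) → ℂ, v 0 = 0 →
        ∃ c : ℂ, (g : Matrix (Fin (d + 1)) (Fin (d + 1)) ℂ).mulVec v = c • v) ↔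
      ∃ (t : ℂˣ) (s : Fin d → ℂ),
        (g : Matrix (Fin (d + 1)) (Fin (d + 1)) ℂ) 0 0 = ((t⁻¹ : ℂˣ) : ℂ) ^ d ∧
        (∀ j : Fin d, (g : Matrix (Fin (d + 1)) (Fin (d + 1)) ℂ) 0 j.succ = 0) ∧
        (∀ i : Fin d, (g : Matrix (Fin (d + 1)) (Fin (d + 1)) ℂ) i.succ 0 = s i) ∧
        (∀ i j : Fin d, (g : Matrix (Fin (d + 1)) (Fin (d + 1)) ℂ) i.succ j.succ =
          if i = j then (t : ℂ) else 0) := by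
  rw [Matrix.forall_exists_mulVec_eq_smul_of_apply_zero_eq_zero_iff]
  constructor
  · rintro ⟨hrow, a, hblock⟩
    have hdet : g 0 0 * a ^ d = 1 := calc
      g 0 0 * a ^ d = (g : Matrix (Fin (d + 1)) (Fin (d + 1)) ℂ).det := by
        rw [Matrix.det_eq_mul_det_submatrix_succ_of_forall_apply_zero_succ_eq_zero hrow, hblock,
          Matrix.scalar_apply, Matrix.det_diagonal, Finset.prod_const, Finset.card_univ,
          Fintype.card_fin]
      _ = 1 := g.det_coe
    obtain ⟨t, rfl⟩ : IsUnit a :=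
      (isUnit_pow_iff (Nat.one_le_iff_ne_zero.mp hd)).mp (IsUnit.of_mul_eq_one_right _ hdet)
    refine ⟨t, fun i ↦ g i.succ 0, ?_, hrow, fun _ ↦ rfl, fun i j ↦ ?_⟩
    · rw [eq_inv_of_mul_eq_one_left hdet, Units.val_inv_eq_inv_val, inv_pow]
    · simpa [Matrix.diagonal_apply] using congr_fun₂ hblock i j
  · rintro ⟨t, -, -, hrow, -, hblock⟩
    exact ⟨hrow, t, by ext i j; simp [hblock, Matrix.scalar_apply, Matrix.diagonal_apply]⟩
end

section
/- Fix d ≥ 1 and let G be the subgroup { g ∈ SL(d+1, ℂ) : g fixes the hyperplane H pointwise } of SL(d+1, ℂ). Then G is isomorphic as a group to the semidirect product of the additive group ℂ^d = (Fin d → ℂ) by the multiplicative group ℂˣ, where t ∈ ℂˣ acts on the additive group ℂ^d by the automorphism s ↦ t^(d+1) • s. (In particular G ≅ 𝔾_m ⋉ 𝔾_a^d.) -/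
/-- The action of `ℂˣ` on the additive group `ℂᵈ` where `t` acts as
multiplication by `t^(d+1)`, packaged as a homomorphism into the automorphism
group of `Multiplicative (Fin d → ℂ)`. -/
noncomputable def homothetyTranslationAction (d : ℕ) :
    ℂˣ →* MulAut (Multiplicative (Fin d → ℂ)) where
  toFun t := AddEquiv.toMultiplicative (DistribMulAction.toAddAut ℂˣ (Fin d → ℂ) (t ^ (d + 1)))
  map_one' := by
    ext x
    simp [AddEquiv.toMultiplicative]
  map_mul' t u := by
    ext x
    simp [AddEquiv.toMultiplicative, mul_pow, mul_smul]

/-! The group is `U ⋊ T`: `U` consists of the elations `1 + u e₀ᵀ` with `u₀ = 0`, which fix `H`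
pointwise and add under multiplication, and `T` is the one-parameter subgroup
`t ↦ diag(t⁻ᵈ, t, …, t)`, conjugation by which scales `u` by `t^(d+1)`.
Conversely, if every vector of `H` is an eigenvector of `g`, comparing the eigenvalues of `eᵢ`, `eⱼ`
and `eᵢ + eⱼ` shows that `g` acts on `H` as a single scalar `c`, a unit since `g` is invertible;
then `g · diag(t⁻ᵈ, t, …, t)⁻¹` with `t = c` has determinant one and fixes `H` pointwise, so it is
an elation. -/

namespace Matrix

variable {R : Type*} [CommRing R] {d : ℕ}

theorem exists_forall_mulVec_eq_smul {A : Matrix (Fin (d + 1)) (Fin (d + 1)) R}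
    (h : ∀ v, v 0 = 0 → ∃ c : R, A *ᵥ v = c • v) : ∃ c : R, ∀ v, v 0 = 0 → A *ᵥ v = c • v := by
  rcases d with _ | d
  · refine ⟨0, fun v hv => ?_⟩
    rw [show v = 0 from funext (Fin.forall_fin_one.2 hv), mulVec_zero, smul_zero]
  choose c hc using fun j : Fin (d + 1) => h (Pi.single j.succ 1) (by simp)
  have hc_eq (j : Fin (d + 1)) : c j = c 0 := by
    obtain ⟨c', hc'⟩ := h (Pi.single j.succ 1 + Pi.single (Fin.succ 0) 1) (by simp)
    rw [mulVec_add, hc, hc] at hc'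
    rcases eq_or_ne j 0 with rfl | hj
    · rfl
    have hj' : j.succ ≠ 1 := by simpa using (Fin.succ_injective _).ne hj
    have h1 := congrFun hc' j.succ
    have h2 := congrFun hc' 1
    simp [hj', hj'.symm] at h1 h2
    rw [h1, h2]
  have hcol (i) (j : Fin (d + 1)) : A i j.succ = (c 0 • (1 : Matrix _ _ R)) i j.succ := by
    simpa [mulVec_single_one, hc_eq, one_apply, Pi.single_apply] using congrFun (hc j) i
  refine ⟨c 0, fun v hv => ?_⟩
  calc A *ᵥ v = (c 0 • 1 : Matrix _ _ R) *ᵥ v := by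
        ext i
        simp only [mulVec, dotProduct, Fin.sum_univ_succ, hv, mul_zero, zero_add, hcol]
    _ = c 0 • v := by rw [smul_mulVec, one_mulVec]

def elationMatrix (s : Fin d → R) : Matrix (Fin (d + 1)) (Fin (d + 1)) R :=
  1 + vecMulVec (Fin.cons 0 s) (Pi.single 0 1)

theorem elationMatrix_zero : elationMatrix (0 : Fin d → R) = 1 := by
  rw [elationMatrix, show (Fin.cons 0 0 : Fin (d + 1) → R) = 0 from cons_zero_zero, zero_vecMulVec,
    add_zero]

theorem elationMatrix_succ_zero (s : Fin d → R) (i : Fin d) : elationMatrix s i.succ 0 = s i := by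
  simp [elationMatrix, vecMulVec_apply]

theorem elationMatrix_add (s s' : Fin d → R) :
    elationMatrix (s + s') = elationMatrix s * elationMatrix s' := by
  have hnil : vecMulVec (Fin.cons 0 s) (Pi.single 0 1) *
      vecMulVec (Fin.cons 0 s') (Pi.single 0 1 : Fin (d + 1) → R) = 0 := by
    simp [vecMulVec_mul_vecMulVec]
  have hadd : (Fin.cons 0 (s + s') : Fin (d + 1) → R) = Fin.cons 0 s + Fin.cons 0 s' := by
    ext i; cases i using Fin.cases <;> simp
  rw [elationMatrix, elationMatrix, elationMatrix, Matrix.add_mul, Matrix.mul_add, Matrix.mul_add,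
    hnil, hadd, add_vecMulVec]
  simp only [Matrix.one_mul, Matrix.mul_one, add_zero]
  abel

theorem det_elationMatrix (s : Fin d → R) : (elationMatrix s).det = 1 := by
  rw [elationMatrix, vecMulVec_eq Unit, det_one_add_replicateCol_mul_replicateRow]
  simp

theorem elationMatrix_mulVec (s : Fin d → R) {v : Fin (d + 1) → R} (hv : v 0 = 0) :
    elationMatrix s *ᵥ v = v := by
  simp [elationMatrix, add_mulVec, vecMulVec_mulVec, hv]

theorem eq_elationMatrix_of_mulVec_eq_self {A : Matrix (Fin (d + 1)) (Fin (d + 1)) R}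
    (hA : ∀ v, v 0 = 0 → A *ᵥ v = v) (hdet : A.det = 1) :
    A = elationMatrix fun i => A i.succ 0 := by
  have hcol : ∀ i (j : Fin d), A i j.succ = (1 : Matrix _ _ R) i j.succ := fun i j => by
    simpa [mulVec_single_one, one_apply, Pi.single_apply] using
      congrFun (hA (Pi.single j.succ 1) (by simp)) i
  have hA' : A = 1 + vecMulVec (A.col 0 - Pi.single 0 1) (Pi.single 0 1) := by
    ext i j
    cases j using Fin.cases <;> simp [vecMulVec_apply, hcol, one_apply, Pi.single_apply]
  have h00 : A 0 0 = 1 := by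
    rw [hA', vecMulVec_eq Unit, det_one_add_replicateCol_mul_replicateRow] at hdet
    simpa using hdet
  conv_lhs => rw [hA']
  rw [elationMatrix]
  congr 2
  ext i
  cases i using Fin.cases <;> simp [h00]

variable (d) in
def hyperplaneScalingMatrix (t : Rˣ) : Matrix (Fin (d + 1)) (Fin (d + 1)) R :=
  diagonal (Fin.cons ((↑t⁻¹ : R) ^ d) fun _ => ↑t)

theorem det_hyperplaneScalingMatrix (t : Rˣ) : (hyperplaneScalingMatrix d t).det = 1 := by
  simp [hyperplaneScalingMatrix, det_diagonal, Fin.prod_univ_succ, ← mul_pow]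

theorem hyperplaneScalingMatrix_one : hyperplaneScalingMatrix d (1 : Rˣ) = 1 := by
  rw [hyperplaneScalingMatrix, ← diagonal_one]
  congr 1
  ext i
  cases i using Fin.cases <;> simp

theorem hyperplaneScalingMatrix_mul (t t' : Rˣ) :
    hyperplaneScalingMatrix d (t * t') =
      hyperplaneScalingMatrix d t * hyperplaneScalingMatrix d t' := by
  simp only [hyperplaneScalingMatrix, diagonal_mul_diagonal]
  congr 1
  ext i
  cases i using Fin.cases <;> simp [mul_pow, mul_comm]

theorem hyperplaneScalingMatrix_mulVec (t : Rˣ) {v : Fin (d + 1) → R} (hv : v 0 = 0) :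
    hyperplaneScalingMatrix d t *ᵥ v = (t : R) • v := by
  ext i
  cases i using Fin.cases <;> simp [hyperplaneScalingMatrix, mulVec_diagonal, hv]

theorem hyperplaneScalingMatrix_mul_elationMatrix (t : Rˣ) (s : Fin d → R) :
    hyperplaneScalingMatrix d t * elationMatrix s =
      elationMatrix ((t : R) ^ (d + 1) • s) * hyperplaneScalingMatrix d t := by
  have hpow : (t : R) ^ (d + 1) * (↑t⁻¹ : R) ^ d = t := by
    rw [pow_succ', mul_assoc, ← mul_pow, Units.mul_inv, one_pow, mul_one]
  ext i j
  rw [hyperplaneScalingMatrix, diagonal_mul, mul_diagonal]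
  cases i using Fin.cases with
  | zero =>
    cases j using Fin.cases <;>
      simp [elationMatrix, vecMulVec_apply, (Fin.succ_ne_zero _).symm]
  | succ i =>
    cases j using Fin.cases with
    | zero =>
      simp [elationMatrix, vecMulVec_apply]
      linear_combination -s i * hpow
    | succ j => simp [elationMatrix, vecMulVec_apply, one_apply]

end Matrix

namespace Matrix.SpecialLinearGroup

variable {R : Type*} [CommRing R] {d : ℕ}

def elation : Multiplicative (Fin d → R) →* SpecialLinearGroup (Fin (d + 1)) R where
  toFun s := ⟨elationMatrix s.toAdd, det_elationMatrix _⟩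
  map_one' := Subtype.ext elationMatrix_zero
  map_mul' _ _ := Subtype.ext <| elationMatrix_add _ _

variable (d) in
def hyperplaneScaling : Rˣ →* SpecialLinearGroup (Fin (d + 1)) R where
  toFun t := ⟨hyperplaneScalingMatrix d t, det_hyperplaneScalingMatrix t⟩
  map_one' := Subtype.ext hyperplaneScalingMatrix_one
  map_mul' t t' := Subtype.ext <| hyperplaneScalingMatrix_mul t t'

theorem coe_elation (s : Multiplicative (Fin d → R)) :
    (elation s : Matrix (Fin (d + 1)) (Fin (d + 1)) R) = elationMatrix s.toAdd :=
  rfl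

theorem coe_hyperplaneScaling (t : Rˣ) :
    (hyperplaneScaling d t : Matrix (Fin (d + 1)) (Fin (d + 1)) R) = hyperplaneScalingMatrix d t :=
  rfl

theorem hyperplaneScaling_mul_elation (t : Rˣ) (s : Multiplicative (Fin d → R)) :
    hyperplaneScaling d t * elation s =
      elation (.ofAdd ((t : R) ^ (d + 1) • s.toAdd)) * hyperplaneScaling d t :=
  Subtype.ext <| hyperplaneScalingMatrix_mul_elationMatrix t s.toAdd

theorem elation_injective : Function.Injective (elation : Multiplicative (Fin d → R) →* _) := by
  intro s s' h
  have h' : elationMatrix s.toAdd = elationMatrix s'.toAdd := congrArg Subtype.val h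
  refine Multiplicative.toAdd.injective (funext fun i => ?_)
  simpa only [elationMatrix_succ_zero] using congrFun (congrFun h' i.succ) 0

theorem isUnit_of_forall_mulVec_eq_smul (hd : 0 < d) {g : SpecialLinearGroup (Fin (d + 1)) R}
    {c : R} (hg : ∀ v : Fin (d + 1) → R, v 0 = 0 → (g : Matrix _ _ R) *ᵥ v = c • v) :
    IsUnit c := by
  set k : Fin (d + 1) := Fin.succ ⟨0, hd⟩
  have hk :
      Pi.single k 1 = c • ((↑g⁻¹ : Matrix (Fin (d + 1)) (Fin (d + 1)) R) *ᵥ Pi.single k 1) := by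
    rw [← mulVec_smul, ← hg _ (by simp [k]), mulVec_mulVec, ← coe_mul, inv_mul_cancel, coe_one,
      one_mulVec]
  exact .of_mul_eq_one _ (by simpa using (congrFun hk k).symm)

theorem exists_eq_elation_mul_hyperplaneScaling {g : SpecialLinearGroup (Fin (d + 1)) R} {c : Rˣ}
    (hg : ∀ v : Fin (d + 1) → R, v 0 = 0 → (g : Matrix _ _ R) *ᵥ v = (c : R) • v) :
    ∃ s, g = elation s * hyperplaneScaling d c := by
  have hfix (v : Fin (d + 1) → R) (hv : v 0 = 0) :
      ((g * hyperplaneScaling d c⁻¹ : SpecialLinearGroup _ R) : Matrix _ _ R) *ᵥ v = v := by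
    rw [coe_mul, ← mulVec_mulVec, coe_hyperplaneScaling, hyperplaneScalingMatrix_mulVec _ hv,
      mulVec_smul, hg v hv, smul_smul, Units.inv_mul, one_smul]
  refine ⟨.ofAdd fun i => (g * hyperplaneScaling d c⁻¹) i.succ 0, ?_⟩
  rw [← mul_inv_eq_iff_eq_mul, ← map_inv]
  exact Subtype.ext (eq_elationMatrix_of_mulVec_eq_self hfix (det_coe _))

end Matrix.SpecialLinearGroup

theorem homothetyTranslationAction_apply (d : ℕ) (t : ℂˣ) (s : Multiplicative (Fin d → ℂ)) :
    homothetyTranslationAction d t s = .ofAdd ((t : ℂ) ^ (d + 1) • s.toAdd) := by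
  simp [homothetyTranslationAction, AddEquiv.toMultiplicative, Units.smul_def]

open Matrix Matrix.SpecialLinearGroup

noncomputable def hyperplaneFixingHom (d : ℕ) :
    Multiplicative (Fin d → ℂ) ⋊[homothetyTranslationAction d] ℂˣ →*
      SpecialLinearGroup (Fin (d + 1)) ℂ :=
  SemidirectProduct.lift elation (hyperplaneScaling d) fun t => by
    refine MonoidHom.ext fun s => ?_
    simp only [MonoidHom.comp_apply, MulEquiv.coe_toMonoidHom, MulAut.conj_apply,
      homothetyTranslationAction_apply]
    rw [eq_mul_inv_iff_mul_eq, hyperplaneScaling_mul_elation]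

theorem hyperplaneFixingHom_apply {d : ℕ}
    (x : Multiplicative (Fin d → ℂ) ⋊[homothetyTranslationAction d] ℂˣ) :
    hyperplaneFixingHom d x = elation x.left * hyperplaneScaling d x.right := rfl

theorem hyperplaneFixingHom_mulVec {d : ℕ}
    (x : Multiplicative (Fin d → ℂ) ⋊[homothetyTranslationAction d] ℂˣ) {v : Fin (d + 1) → ℂ}
    (hv : v 0 = 0) :
    (hyperplaneFixingHom d x : Matrix (Fin (d + 1)) (Fin (d + 1)) ℂ) *ᵥ v = (x.right : ℂ) • v := by
  rw [hyperplaneFixingHom_apply, coe_mul, ← mulVec_mulVec, coe_hyperplaneScaling,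
    hyperplaneScalingMatrix_mulVec _ hv, mulVec_smul, coe_elation, elationMatrix_mulVec _ hv]

theorem hyperplaneFixingHom_injective {d : ℕ} (hd : 0 < d) :
    Function.Injective (hyperplaneFixingHom d) := by
  refine (injective_iff_map_eq_one _).2 fun x hx => ?_
  set k : Fin (d + 1) := Fin.succ ⟨0, hd⟩
  have hk := congrFun (hyperplaneFixingHom_mulVec x (v := Pi.single k 1) (by simp [k])) k
  rw [hx, coe_one, one_mulVec] at hk
  have hright : x.right = 1 := Units.ext (by simpa using hk.symm)
  have hleft : x.left = 1 := by
    rw [hyperplaneFixingHom_apply, hright, map_one, mul_one] at hx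
    exact elation_injective (hx.trans (map_one _).symm)
  exact SemidirectProduct.ext hleft hright

/-- The subgroup `G ⊆ SL(d+1, ℂ)` of elements fixing the hyperplane `H = {v₀ = 0}`
pointwise is isomorphic, as a group, to the semidirect product
`𝔾ₐᵈ ⋊ 𝔾ₘ = (Fin d → ℂ) ⋊ ℂˣ`, where `t ∈ ℂˣ` acts by `s ↦ t^(d+1) • s`:
there is an injective group homomorphism from the semidirect product to
`SL(d+1, ℂ)` whose range is exactly `G`. -/
theorem fixesHyperplane_iso_semidirectProduct (d : ℕ) (hd : 1 ≤ d) :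
    ∃ f : (Multiplicative (Fin d → ℂ) ⋊[homothetyTranslationAction d] ℂˣ) →*
        Matrix.SpecialLinearGroup (Fin (d + 1)) ℂ,
      Function.Injective f ∧
      Set.range f =
        { g : Matrix.SpecialLinearGroup (Fin (d + 1)) ℂ |
            ∀ v : Fin (d + 1) → ℂ, v 0 = 0 →
              ∃ c : ℂ, (g : Matrix (Fin (d + 1)) (Fin (d + 1)) ℂ).mulVec v = c • v } := by
  refine ⟨hyperplaneFixingHom d, hyperplaneFixingHom_injective hd,
    Set.ext fun g => ⟨?_, fun hg => ?_⟩⟩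
  · rintro ⟨x, rfl⟩ v hv
    exact ⟨x.right, hyperplaneFixingHom_mulVec x hv⟩
  · obtain ⟨c, hc⟩ := exists_forall_mulVec_eq_smul hg
    obtain ⟨s, hs⟩ := exists_eq_elation_mul_hyperplaneScaling
      (c := (isUnit_of_forall_mulVec_eq_smul hd hc).unit) hc
    exact ⟨⟨s, _⟩, hs.symm⟩
end

section
/- Fix d ≥ 1. The set of g ∈ SL(d+1, ℂ) such that g fixes the hyperplane H pointwise and there exists c : ℂ with g.mulVec (Pi.single 0 1) = c • Pi.single 0 1 is exactly { D(t) : t ∈ ℂˣ }, where D(t) is the diagonal matrix with D(t) 0 0 = (t⁻¹)^d and D(t) i i = t for all i ≠ 0 (and zero off-diagonal entries). Moreover, t ↦ D(t) is an injective group homomorphism from ℂˣ to SL(d+1, ℂ); in particular this stabilizer is an infinite subgroup isomorphic to ℂˣ. -/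
/-!
Feeding the coordinate vectors `Pi.single j 1` into the eigenvector conditions shows that the
matrix is diagonal, and feeding the sums `Pi.single i 1 + Pi.single j 1` with `i, j ≠ 0` shows
that its diagonal is `(a, b, …, b)`. The determinant condition `a * b ^ d = 1` with `d ≥ 1` then
makes `b` a unit `t` with `a = t⁻ᵈ`.
-/

open Matrix

namespace Matrix

variable {n R : Type*} [Fintype n] [DecidableEq n] [NonAssocSemiring R]

theorem apply_eq_zero_of_mulVec_single_eq_smul {A : Matrix n n R} {j : n} {c : R}
    (h : A *ᵥ Pi.single j 1 = c • Pi.single j 1) {i : n} (hij : i ≠ j) : A i j = 0 := by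
  simpa [mulVec_single_one, hij] using congrFun h i

theorem isDiag_of_forall_mulVec_single_eq_smul {A : Matrix n n R}
    (h : ∀ j, ∃ c : R, A *ᵥ Pi.single j 1 = c • Pi.single j 1) : A.IsDiag := fun _ j hij ↦
  apply_eq_zero_of_mulVec_single_eq_smul (h j).choose_spec hij

theorem eq_of_diagonal_mulVec_add_single_eq_smul {a : n → R} {i j : n} {c : R} (hij : i ≠ j)
    (h : diagonal a *ᵥ (Pi.single i 1 + Pi.single j 1) = c • (Pi.single i 1 + Pi.single j 1)) :
    a i = a j := by
  have hi : a i = c := by simpa [mulVec_diagonal, hij] using congrFun h i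
  have hj : a j = c := by simpa [mulVec_diagonal, hij.symm] using congrFun h j
  rw [hi, hj]

end Matrix

section Homology

variable {R : Type*} [CommRing R] {d : ℕ}

theorem det_diagonal_ite_zero (a b : R) :
    (diagonal fun i : Fin (d + 1) ↦ if i = 0 then a else b).det = a * b ^ d := by
  simp [det_diagonal, Fin.prod_univ_succ, Fin.succ_ne_zero]

variable (d) in
/-- The homology of `ℙ^d` with axis `{v₀ = 0}` and centre `(1 : 0 : ⋯ : 0)`, normalised to
determinant one. -/
def homologyMatrix (t : Rˣ) : Matrix (Fin (d + 1)) (Fin (d + 1)) R :=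
  diagonal fun i ↦ if i = 0 then ((t⁻¹ : Rˣ) : R) ^ d else (t : R)

theorem det_homologyMatrix (t : Rˣ) : (homologyMatrix d t).det = 1 := by
  rw [homologyMatrix, det_diagonal_ite_zero, ← mul_pow, Units.inv_mul, one_pow]

theorem homologyMatrix_mul (s t : Rˣ) :
    homologyMatrix d (s * t) = homologyMatrix d s * homologyMatrix d t := by
  rw [homologyMatrix, homologyMatrix, homologyMatrix, diagonal_mul_diagonal]
  congr 1
  funext i
  split_ifs <;> simp [mul_pow, mul_comm]

theorem homologyMatrix_apply_self_of_ne_zero (t : Rˣ) {i : Fin (d + 1)} (hi : i ≠ 0) :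
    homologyMatrix d t i i = t := by
  simp [homologyMatrix, hi]

theorem homologyMatrix_mulVec_of_apply_zero (t : Rˣ) {v : Fin (d + 1) → R} (hv : v 0 = 0) :
    homologyMatrix d t *ᵥ v = (t : R) • v := by
  funext i
  rcases eq_or_ne i 0 with rfl | hi
  · simp [homologyMatrix, mulVec_diagonal, hv]
  · simp [homologyMatrix, mulVec_diagonal, hi]

theorem homologyMatrix_mulVec_single_zero (t : Rˣ) :
    homologyMatrix d t *ᵥ Pi.single 0 1 = ((t⁻¹ : Rˣ) : R) ^ d • Pi.single 0 1 := by
  funext i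
  rcases eq_or_ne i 0 with rfl | hi
  · simp [homologyMatrix, mulVec_diagonal]
  · simp [homologyMatrix, mulVec_diagonal, hi]

variable (d) in
def homologyHom : Rˣ →* SpecialLinearGroup (Fin (d + 1)) R :=
  MonoidHom.mk' (fun t ↦ ⟨homologyMatrix d t, det_homologyMatrix t⟩)
    fun s t ↦ Subtype.ext (homologyMatrix_mul s t)

theorem coe_homologyHom (t : Rˣ) :
    (homologyHom d t : Matrix (Fin (d + 1)) (Fin (d + 1)) R) = homologyMatrix d t :=
  rfl

theorem homologyHom_injective (hd : d ≠ 0) : Function.Injective (homologyHom (R := R) d) := by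
  intro s t hst
  have hlast : Fin.last d ≠ 0 := Fin.val_ne_zero_iff.mp hd
  have hentry := congrFun₂ (congrArg Subtype.val hst) (Fin.last d) (Fin.last d)
  rw [coe_homologyHom, coe_homologyHom, homologyMatrix_apply_self_of_ne_zero _ hlast,
    homologyMatrix_apply_self_of_ne_zero _ hlast] at hentry
  exact Units.ext hentry

theorem exists_eq_homologyMatrix_of_mul_pow_eq_one (hd : d ≠ 0) {a b : R} (h : a * b ^ d = 1) :
    ∃ t : Rˣ, (diagonal fun i : Fin (d + 1) ↦ if i = 0 then a else b) = homologyMatrix d t := by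
  have hb : IsUnit b := (isUnit_pow_iff hd).mp (.of_mul_eq_one_right a h)
  have ha : a = ((hb.unit⁻¹ : Rˣ) : R) ^ d := by
    rw [← Units.val_pow_eq_pow_val, inv_pow]
    exact Units.eq_inv_of_mul_eq_one_left (by simpa [mul_comm] using h)
  exact ⟨hb.unit, by rw [homologyMatrix, ha, IsUnit.unit_spec]⟩

theorem exists_eq_homologyMatrix_of_forall_mulVec_eq_smul (hd : d ≠ 0)
    {A : Matrix (Fin (d + 1)) (Fin (d + 1)) R} (hdet : A.det = 1)
    (hH : ∀ v : Fin (d + 1) → R, v 0 = 0 → ∃ c : R, A *ᵥ v = c • v)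
    (h0 : ∃ c : R, A *ᵥ Pi.single 0 1 = c • Pi.single 0 1) :
    ∃ t : Rˣ, A = homologyMatrix d t := by
  have hsingle : ∀ j, ∃ c : R, A *ᵥ Pi.single j 1 = c • Pi.single j 1 := by
    intro j
    rcases eq_or_ne j 0 with rfl | hj
    · exact h0
    · exact hH _ (by simp [hj.symm])
  have hdiag : diagonal A.diag = A :=
    (isDiag_of_forall_mulVec_single_eq_smul hsingle).diagonal_diag
  have hlast : Fin.last d ≠ 0 := Fin.val_ne_zero_iff.mp hd
  have hconst : ∀ i ≠ 0, A i i = A (Fin.last d) (Fin.last d) := by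
    intro i hi
    rcases eq_or_ne i (Fin.last d) with rfl | hne
    · rfl
    obtain ⟨c, hc⟩ :=
      hH (Pi.single i 1 + Pi.single (Fin.last d) 1) (by simp [hi.symm, hlast.symm])
    rw [← hdiag] at hc
    exact eq_of_diagonal_mulVec_add_single_eq_smul hne hc
  have hA : A = diagonal fun i ↦ if i = 0 then A 0 0 else A (Fin.last d) (Fin.last d) := by
    conv_lhs => rw [← hdiag]
    congr 1
    funext i
    split_ifs with hi
    · rw [hi]; rfl
    · exact hconst i hi
  rw [hA] at hdet ⊢
  rw [det_diagonal_ite_zero] at hdet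
  exact exists_eq_homologyMatrix_of_mul_pow_eq_one hd hdet

theorem exists_eq_homologyMatrix_iff (hd : d ≠ 0) {A : Matrix (Fin (d + 1)) (Fin (d + 1)) R}
    (hdet : A.det = 1) :
    ((∀ v : Fin (d + 1) → R, v 0 = 0 → ∃ c : R, A *ᵥ v = c • v) ∧
        ∃ c : R, A *ᵥ Pi.single 0 1 = c • Pi.single 0 1) ↔
      ∃ t : Rˣ, A = homologyMatrix d t := by
  constructor
  · rintro ⟨hH, h0⟩
    exact exists_eq_homologyMatrix_of_forall_mulVec_eq_smul hd hdet hH h0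
  · rintro ⟨t, rfl⟩
    exact ⟨fun v hv ↦ ⟨t, homologyMatrix_mulVec_of_apply_zero t hv⟩,
      _, homologyMatrix_mulVec_single_zero t⟩

end Homology

/-- Inside the group of elements of `SL(d+1, ℂ)` fixing the hyperplane
`H = {v₀ = 0}` pointwise, the stabilizer of the point `(1 : 0 : ⋯ : 0)` off `H`
consists exactly of the diagonal matrices `D(t) = diag(t⁻ᵈ, t, …, t)` for
`t ∈ ℂˣ`; moreover `t ↦ D(t)` is an injective group homomorphism `ℂˣ → SL(d+1, ℂ)`,
so this stabilizer is a copy of `𝔾ₘ`. -/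
theorem stabilizer_of_point_is_Gm (d : ℕ) (hd : 1 ≤ d) :
    ({ g : Matrix.SpecialLinearGroup (Fin (d + 1)) ℂ |
        (∀ v : Fin (d + 1) → ℂ, v 0 = 0 →
          ∃ c : ℂ, (g : Matrix (Fin (d + 1)) (Fin (d + 1)) ℂ).mulVec v = c • v) ∧
        ∃ c : ℂ, (g : Matrix (Fin (d + 1)) (Fin (d + 1)) ℂ).mulVec
            (Pi.single 0 1 : Fin (d + 1) → ℂ) = c • (Pi.single 0 1 : Fin (d + 1) → ℂ) } =
      { g : Matrix.SpecialLinearGroup (Fin (d + 1)) ℂ |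
        ∃ t : ℂˣ, (g : Matrix (Fin (d + 1)) (Fin (d + 1)) ℂ) =
          Matrix.diagonal (fun i => if i = 0 then ((t⁻¹ : ℂˣ) : ℂ) ^ d else (t : ℂ)) }) ∧
    ∃ D : ℂˣ →* Matrix.SpecialLinearGroup (Fin (d + 1)) ℂ,
      Function.Injective D ∧
      ∀ t : ℂˣ, (D t : Matrix (Fin (d + 1)) (Fin (d + 1)) ℂ) =
        Matrix.diagonal (fun i => if i = 0 then ((t⁻¹ : ℂˣ) : ℂ) ^ d else (t : ℂ)) := by
  have hd' : d ≠ 0 := Nat.one_le_iff_ne_zero.mp hd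
  exact ⟨Set.ext fun g ↦ exists_eq_homologyMatrix_iff hd' g.2, homologyHom d,
    homologyHom_injective hd', coe_homologyHom⟩
end

section
/- Fix d ≥ 1 and n ≥ 0, and let p : Fin n → (Fin (d+1) → ℂ) be a family of nonzero vectors (representing a configuration of n points of ℙ^d). Then the stabilizer set S = { g ∈ SL(d+1, ℂ) : g fixes the hyperplane H pointwise and for every i : Fin n there exists c : ℂ with g.mulVec (p i) = c • (p i) } is finite if and only if there exist indices i, j : Fin n such that (p i) 0 ≠ 0, (p j) 0 ≠ 0, and p i, p j are not proportional (there is no a : ℂ with p j = a • p i). -/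
/-!
If `g` fixes `H = ker φ` pointwise and has two non-proportional eigenvectors `u`, `v` off `H`,
then `φ v • u - φ u • v ∈ H` is an eigenvector too, which forces the eigenvalue of `u` to equal
the one on `H`; as `H` and `u` span the space, `g` is a scalar matrix, i.e. a root of unity times
the identity, and there are finitely many of these. Conversely, if all points of the
configuration off `H` lie on one line `K ∙ q`, the homologies with axis `H` and centre `q`,
normalised to determinant one, form an infinite family in the stabilizer.
-/

open Matrix

namespace LinearMap

variable {K V : Type*} [Field K] [AddCommGroup V] [Module K V]

theorem exists_forall_mem_apply_eq_smul (f : V →ₗ[K] V) (W : Submodule K V)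
    (h : ∀ v ∈ W, ∃ c : K, f v = c • v) : ∃ c : K, ∀ v ∈ W, f v = c • v := by
  have hW : ∀ v ∈ W, f v ∈ W := fun v hv => by
    obtain ⟨c, hc⟩ := h v hv
    exact hc ▸ W.smul_mem c hv
  obtain ⟨c, hc⟩ := (f.restrict hW).exists_eq_smul_id_of_forall_notLinearIndependent fun v => by
    obtain ⟨c, hc⟩ := h v v.2
    rw [LinearIndependent.pair_iff]
    push Not
    exact ⟨c, -1, Subtype.ext (by simp [hc]), by simp⟩
  exact ⟨c, fun v hv => congr_arg Subtype.val (LinearMap.congr_fun hc ⟨v, hv⟩)⟩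

theorem exists_eq_smul_id_of_forall_ker_of_eigenvectors (f : V →ₗ[K] V) (φ : Module.Dual K V)
    (hker : ∀ v, φ v = 0 → ∃ c : K, f v = c • v) {u v : V} (hu : φ u ≠ 0) (hv : φ v ≠ 0)
    (huv : ¬ ∃ a : K, v = a • u) (hfu : ∃ a : K, f u = a • u) (hfv : ∃ b : K, f v = b • v) :
    ∃ c : K, f = c • LinearMap.id := by
  obtain ⟨c, hc⟩ := f.exists_forall_mem_apply_eq_smul (ker φ) hker
  obtain ⟨a, ha⟩ := hfu
  obtain ⟨b, hb⟩ := hfv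
  have hind : LinearIndependent K ![u, v] :=
    (LinearIndependent.pair_iff' fun h => hu (by simp [h])).2 fun a h => huv ⟨a, h.symm⟩
  have hac : a = c := by
    have hw := hc (φ v • u - φ u • v) (by simp [mul_comm])
    simp only [map_sub, map_smul, ha, hb] at hw
    have hcomb : (φ v * (a - c)) • u + (-(φ u * (b - c))) • v = 0 := by
      linear_combination (norm := module) hw
    have := (LinearIndependent.pair_iff.1 hind _ _ hcomb).1
    simpa [hv, sub_eq_zero] using this
  refine ⟨c, LinearMap.ext fun z => ?_⟩
  have hz : z - (φ z / φ u) • u ∈ ker φ := by simp [hu]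
  calc f z = f (z - (φ z / φ u) • u) + (φ z / φ u) • f u := by simp
    _ = c • z := by rw [hc _ hz, ha, hac]; module

end LinearMap

theorem exists_apply_eq_one_forall_eq_smul_of_not_exists_pair {K ι κ : Type*} [Field K]
    [DecidableEq ι] (i₀ : ι) (p : κ → ι → K)
    (h : ¬ ∃ i j, p i i₀ ≠ 0 ∧ p j i₀ ≠ 0 ∧ ¬ ∃ a : K, p j = a • p i) :
    ∃ q : ι → K, q i₀ = 1 ∧ ∀ j, p j i₀ ≠ 0 → ∃ t : K, p j = t • q := by
  push Not at h
  by_cases hoff : ∃ i, p i i₀ ≠ 0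
  · obtain ⟨i, hi⟩ := hoff
    refine ⟨(p i i₀)⁻¹ • p i, by simp [hi], fun j hj => ?_⟩
    obtain ⟨a, ha⟩ := h i j hi hj
    exact ⟨a * p i i₀, by rw [ha, smul_smul, mul_assoc, mul_inv_cancel₀ hi, mul_one]⟩
  · push Not at hoff
    exact ⟨Pi.single i₀ 1, by simp, fun j hj => absurd (hoff j) hj⟩

namespace Matrix

variable {K ι : Type*} [Field K] [Fintype ι] [DecidableEq ι]

-- The homology of projective space with axis `{v i₀ = 0}`, centre `q` and ratio `a` on the axis,
-- scaled so that it has determinant one when `q i₀ = 1` and `a ≠ 0`.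
def homology (i₀ : ι) (q : ι → K) (a : K) : Matrix ι ι K :=
  a • (1 + vecMulVec q (Pi.single i₀ ((a ^ Fintype.card ι)⁻¹ - 1)))

theorem homology_mulVec (i₀ : ι) (q : ι → K) (a : K) (v : ι → K) :
    homology i₀ q a *ᵥ v = a • (v + (((a ^ Fintype.card ι)⁻¹ - 1) * v i₀) • q) := by
  rw [homology, smul_mulVec, add_mulVec, one_mulVec, vecMulVec_mulVec, op_smul_eq_smul,
    single_dotProduct]

theorem homology_mulVec_of_apply_eq_zero {i₀ : ι} (q : ι → K) (a : K) {v : ι → K}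
    (hv : v i₀ = 0) : homology i₀ q a *ᵥ v = a • v := by
  simp [homology_mulVec, hv]

theorem homology_mulVec_smul_self {i₀ : ι} {q : ι → K} (hq : q i₀ = 1) (a t : K) :
    homology i₀ q a *ᵥ (t • q) = ((a ^ Fintype.card ι)⁻¹ * a) • (t • q) := by
  rw [homology_mulVec]
  simp [hq]
  module

theorem det_homology {i₀ : ι} {q : ι → K} (hq : q i₀ = 1) {a : K} (ha : a ≠ 0) :
    (homology i₀ q a).det = 1 := by
  rw [homology, det_smul, vecMulVec_eq Unit, det_one_add_replicateCol_mul_replicateRow]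
  simp [hq, ha]

end Matrix

namespace Matrix.SpecialLinearGroup

variable {K ι κ : Type*} [Field K] [Fintype ι] [DecidableEq ι]

def configStabilizer (i₀ : ι) (p : κ → ι → K) : Set (SpecialLinearGroup ι K) :=
  { g | (∀ v : ι → K, v i₀ = 0 → ∃ c : K, (g : Matrix ι ι K) *ᵥ v = c • v) ∧
      ∀ i, ∃ c : K, (g : Matrix ι ι K) *ᵥ p i = c • p i }

theorem mem_center_of_mem_configStabilizer {i₀ : ι} {p : κ → ι → K} {i j : κ}
    (hi : p i i₀ ≠ 0) (hj : p j i₀ ≠ 0) (hij : ¬ ∃ a : K, p j = a • p i)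
    {g : SpecialLinearGroup ι K} (hg : g ∈ configStabilizer i₀ p) :
    g ∈ Subgroup.center (SpecialLinearGroup ι K) := by
  obtain ⟨hker, hp⟩ := hg
  obtain ⟨c, hc⟩ :=
    (Matrix.toLin' (g : Matrix ι ι K)).exists_eq_smul_id_of_forall_ker_of_eigenvectors
      (LinearMap.proj i₀) (u := p i) (v := p j) (by simpa using hker) hi hj hij
      (by simpa using hp i) (by simpa using hp j)
  have hg : (g : Matrix ι ι K) = scalar ι c := by
    rw [← LinearMap.toMatrix'_toLin' (g : Matrix ι ι K), hc]
    simp [smul_one_eq_diagonal]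
  refine mem_center_iff.2 ⟨c, ?_, hg.symm⟩
  simpa [hg] using g.2

theorem finite_configStabilizer {i₀ : ι} {p : κ → ι → K} {i j : κ}
    (hi : p i i₀ ≠ 0) (hj : p j i₀ ≠ 0) (hij : ¬ ∃ a : K, p j = a • p i) :
    (configStabilizer i₀ p).Finite :=
  have : Nonempty ι := ⟨i₀⟩
  have : Finite (Subgroup.center (SpecialLinearGroup ι K)) :=
    .of_equiv _ (center_equiv_rootsOfUnity' i₀).symm.toEquiv
  (Set.toFinite _).subset fun _ hg => mem_center_of_mem_configStabilizer hi hj hij hg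

theorem homology_mem_configStabilizer {i₀ : ι} {p : κ → ι → K} {q : ι → K} (hq : q i₀ = 1)
    (hpq : ∀ j, p j i₀ ≠ 0 → ∃ t : K, p j = t • q) {a : K} (ha : a ≠ 0) :
    (⟨homology i₀ q a, det_homology hq ha⟩ : SpecialLinearGroup ι K) ∈ configStabilizer i₀ p := by
  refine ⟨fun v hv => ⟨a, homology_mulVec_of_apply_eq_zero q a hv⟩, fun j => ?_⟩
  by_cases hj : p j i₀ = 0
  · exact ⟨a, homology_mulVec_of_apply_eq_zero q a hj⟩
  · obtain ⟨t, ht⟩ := hpq j hj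
    exact ht ▸ ⟨_, homology_mulVec_smul_self hq a t⟩

theorem infinite_configStabilizer [Infinite K] {i₀ j₀ : ι} (hj₀ : j₀ ≠ i₀) (p : κ → ι → K)
    (h : ¬ ∃ i j, p i i₀ ≠ 0 ∧ p j i₀ ≠ 0 ∧ ¬ ∃ a : K, p j = a • p i) :
    (configStabilizer i₀ p).Infinite := by
  obtain ⟨q, hq, hpq⟩ := exists_apply_eq_one_forall_eq_smul_of_not_exists_pair i₀ p h
  have : Infinite {a : K // a ≠ 0} := (Set.finite_singleton (0 : K)).infinite_compl.to_subtype
  refine Set.infinite_of_injective_forall_mem (f := fun a : {a : K // a ≠ 0} =>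
    (⟨homology i₀ q a, det_homology hq a.2⟩ : SpecialLinearGroup ι K)) (fun a b hab => ?_)
    fun a => homology_mem_configStabilizer hq hpq a.2
  have hsingle :=
    congr_arg (fun g : SpecialLinearGroup ι K => (g : Matrix ι ι K) *ᵥ Pi.single j₀ 1) hab
  simp only [homology_mulVec_of_apply_eq_zero q _ (Pi.single_eq_of_ne hj₀.symm 1)] at hsingle
  exact Subtype.ext (smul_left_injective K (by simp) hsingle)

end Matrix.SpecialLinearGroup

theorem stabilizer_finite_iff_two_points_off_H_general (d n : ℕ) (hd : 1 ≤ d)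
    (p : Fin n → (Fin (d + 1) → ℂ)) :
    ({ g : Matrix.SpecialLinearGroup (Fin (d + 1)) ℂ |
        (∀ v : Fin (d + 1) → ℂ, v 0 = 0 →
          ∃ c : ℂ, (g : Matrix (Fin (d + 1)) (Fin (d + 1)) ℂ).mulVec v = c • v) ∧
        ∀ i : Fin n, ∃ c : ℂ,
          (g : Matrix (Fin (d + 1)) (Fin (d + 1)) ℂ).mulVec (p i) = c • (p i) }).Finite ↔
      ∃ i j : Fin n, (p i) 0 ≠ 0 ∧ (p j) 0 ≠ 0 ∧ ¬ ∃ a : ℂ, p j = a • p i := by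
  change (Matrix.SpecialLinearGroup.configStabilizer 0 p).Finite ↔ _
  refine ⟨fun hfin => ?_, fun ⟨i, j, hi, hj, hij⟩ =>
    Matrix.SpecialLinearGroup.finite_configStabilizer hi hj hij⟩
  by_contra h
  have h10 : (⟨1, by omega⟩ : Fin (d + 1)) ≠ 0 := Fin.ne_of_val_ne one_ne_zero
  exact Matrix.SpecialLinearGroup.infinite_configStabilizer h10 p h hfin

/-- For a configuration `p` of `n` nonzero vectors in `ℂ^(d+1)` (points of `ℙᵈ`),
the stabilizer of `p` inside the group of elements of `SL(d+1, ℂ)` fixing the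
hyperplane `H = {v₀ = 0}` pointwise is finite if and only if the configuration
contains two non-proportional points off `H`. -/
theorem stabilizer_finite_iff_two_points_off_H (d n : ℕ) (hd : 1 ≤ d)
    (p : Fin n → (Fin (d + 1) → ℂ)) (hp : ∀ i, p i ≠ 0) :
    ({ g : Matrix.SpecialLinearGroup (Fin (d + 1)) ℂ |
        (∀ v : Fin (d + 1) → ℂ, v 0 = 0 →
          ∃ c : ℂ, (g : Matrix (Fin (d + 1)) (Fin (d + 1)) ℂ).mulVec v = c • v) ∧
        ∀ i : Fin n, ∃ c : ℂ,
          (g : Matrix (Fin (d + 1)) (Fin (d + 1)) ℂ).mulVec (p i) = c • (p i) }).Finite ↔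
      ∃ i j : Fin n, (p i) 0 ≠ 0 ∧ (p j) 0 ≠ 0 ∧ ¬ ∃ a : ℂ, p j = a • p i :=
  stabilizer_finite_iff_two_points_off_H_general d n hd p
end

section
/- Fix d ≥ 1. For g ∈ SL(d+1, ℂ), the following are equivalent: (i) g fixes the hyperplane H pointwise; (ii) there exist λ ∈ ℂˣ and b : Fin d → ℂ such that for every x : Fin d → ℂ there exists c : ℂ with c ≠ 0 and g.mulVec (Matrix.vecCons 1 x) = c • Matrix.vecCons 1 (λ • x + b). Moreover, for every λ ∈ ℂˣ and b : Fin d → ℂ there exists g ∈ SL(d+1, ℂ) fixing H pointwise realizing this pair (λ, b). In other words, on the affine chart {v₀ ≠ 0} ≅ 𝔸^d, the group fixing H pointwise acts exactly as the group of invertible homothety-translations x ↦ λx + b. -/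
/-!
If every vector of `H = {v₀ = 0}` is an eigenvector of `M`, then `M` is a scalar `μ` on `H`.
Hence `M` is lower triangular with diagonal `(M₀₀, μ, …, μ)`,
so `det M = M₀₀ μᵈ`, and `M (1, x) = M₀₀ • (1, (μ / M₀₀) x + b)` with `b`
the rest of the first column scaled by `M₀₀⁻¹`.

Conversely, `M (1, x) + M (1, -x) = 2 M (1, 0)`; comparing coordinates shows that the scale `c x`
in `M (1, x) = c x • (1, λ x + b)` does not depend on `x`, and then
`M (0, x) = M (1, x) - M (1, 0) = c 0 λ • (0, x)`.

The pair `(λ, b)` is realised by `α • [[1, 0], [b, λ I]]`, where `α ^ (d + 1) = λ⁻ᵈ`.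
-/

open Matrix

namespace Matrix

variable {K : Type*} [Field K] {d : ℕ}

theorem mulVec_vecCons_zero_single_apply (M : Matrix (Fin (d + 1)) (Fin (d + 1)) K) (j : Fin d)
    (i : Fin (d + 1)) : (M *ᵥ vecCons 0 (Pi.single j 1)) i = M i j.succ := by
  simp [mulVec, dotProduct, Fin.sum_univ_succ, Pi.single_apply]

theorem det_eq_mul_pow_of_mulVec_vecCons_zero {M : Matrix (Fin (d + 1)) (Fin (d + 1)) K} {μ : K}
    (hμ : ∀ x, M *ᵥ vecCons 0 x = μ • vecCons 0 x) : M.det = M 0 0 * μ ^ d := by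
  have hcol (i : Fin (d + 1)) (j : Fin d) : M i j.succ = μ * vecCons 0 (Pi.single j 1) i := by
    rw [← mulVec_vecCons_zero_single_apply M j i, hμ]; rfl
  have hlower : M.IsLowerTriangular := by
    intro i j hij
    obtain ⟨k, rfl⟩ := Fin.exists_succ_eq.2 (Fin.ne_zero_of_lt hij)
    rcases Fin.eq_zero_or_eq_succ i with rfl | ⟨l, rfl⟩
    · simp [hcol]
    · have : l ≠ k := by rintro rfl; exact lt_irrefl _ hij
      simp [hcol, this]
  simp [det_of_isLowerTriangular M hlower, Fin.prod_univ_succ, hcol]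

theorem forall_exists_mulVec_eq_smul_iff (M : Matrix (Fin (d + 1)) (Fin (d + 1)) K) :
    (∀ v : Fin (d + 1) → K, v 0 = 0 → ∃ c : K, M *ᵥ v = c • v) ↔
      ∃ μ : K, ∀ x, M *ᵥ vecCons 0 x = μ • vecCons 0 x := by
  constructor
  · intro h
    set N := M.submatrix Fin.succ Fin.succ
    have htail (x : Fin d → K) : Fin.tail (M *ᵥ vecCons 0 x) = N *ᵥ x := by
      ext i; simp [N, Fin.tail, mulVec, dotProduct, Fin.sum_univ_succ]
    obtain ⟨μ, hμ⟩ := N.mulVecLin.exists_eq_smul_id_of_forall_notLinearIndependent fun x hli => by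
      obtain ⟨c, hc⟩ := h (vecCons 0 x) rfl
      have hN : N *ᵥ x = c • x := by rw [← htail, hc]; rfl
      have := LinearIndependent.pair_iff.1 hli c (-1) (by simp [hN])
      exact one_ne_zero (neg_eq_zero.1 this.2)
    refine ⟨μ, fun x => ?_⟩
    obtain ⟨c, hc⟩ := h (vecCons 0 x) rfl
    have hN : N *ᵥ x = μ • x := by simpa using congrArg (· x) hμ
    rw [← Fin.cons_self_tail (M *ᵥ vecCons 0 x), htail, hN, hc]
    ext i; refine Fin.cases ?_ (fun i => ?_) i <;> simp
  · rintro ⟨μ, hμ⟩ v hv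
    refine ⟨μ, ?_⟩
    rw [← Fin.cons_self_tail v, hv]
    exact hμ _

theorem mulVec_vecCons_one_eq_smul {M : Matrix (Fin (d + 1)) (Fin (d + 1)) K} {μ : K}
    (hμ : ∀ x, M *ᵥ vecCons 0 x = μ • vecCons 0 x) (h0 : M 0 0 ≠ 0) (x : Fin d → K) :
    M *ᵥ vecCons 1 x =
      M 0 0 • vecCons 1 ((μ / M 0 0) • x + (M 0 0)⁻¹ • fun i => M i.succ 0) := by
  have hsplit : vecCons (1 : K) x = Pi.single 0 1 + vecCons 0 x := by
    ext i; refine Fin.cases ?_ (fun i => ?_) i <;> simp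
  rw [hsplit, mulVec_add, hμ, mulVec_single_one]
  ext i; refine Fin.cases ?_ (fun i => ?_) i
  · simp
  · simp only [smul_cons, smul_eq_mul, mul_zero, Pi.add_apply, col_apply, cons_val_succ,
      Pi.smul_apply]
    field_simp
    ring

theorem mulVec_vecCons_zero_eq_smul_of_mulVec_vecCons_one [NeZero (2 : K)]
    {M : Matrix (Fin (d + 1)) (Fin (d + 1)) K} {lam : K} (hlam : lam ≠ 0) {b : Fin d → K}
    {c : (Fin d → K) → K} (h : ∀ x, M *ᵥ vecCons 1 x = c x • vecCons 1 (lam • x + b))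
    (x : Fin d → K) : M *ᵥ vecCons 0 x = (c 0 * lam) • vecCons 0 x := by
  have hc (x : Fin d → K) : c x = c 0 := by
    by_contra hne
    obtain ⟨i, hi⟩ : ∃ i, x i ≠ 0 := by
      by_contra! hx
      exact hne (by rw [funext hx, Pi.zero_def])
    have hmid : M *ᵥ vecCons 1 x + M *ᵥ vecCons 1 (-x) = (2 : K) • M *ᵥ vecCons 1 0 := by
      rw [← mulVec_add, ← mulVec_smul]
      congr 1; ext i; refine Fin.cases ?_ (fun i => ?_) i <;> simp [one_add_one_eq_two]
    rw [h, h, h] at hmid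
    have head := congrFun hmid 0
    have tail := congrFun hmid i.succ
    simp only [smul_cons, smul_eq_mul, mul_one, smul_add, smul_neg, Pi.add_apply,
      cons_val_zero, smul_zero, zero_add, Pi.smul_apply, cons_val_succ, Pi.neg_apply] at head tail
    have : 2 * lam * x i * (c x - c 0) = 0 := by
      linear_combination tail + (lam * x i - b i) * head
    exact hne <| sub_eq_zero.1 <|
      (mul_eq_zero.1 this).resolve_left (mul_ne_zero (mul_ne_zero two_ne_zero hlam) hi)
  have hsplit : vecCons (0 : K) x = vecCons 1 x - vecCons 1 0 := by
    ext i; refine Fin.cases ?_ (fun i => ?_) i <;> simp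
  rw [hsplit, mulVec_sub, h, h, hc x]
  ext i; refine Fin.cases ?_ (fun i => ?_) i <;> simp [mul_assoc]

def homothetyMatrix (lam : K) (b : Fin d → K) : Matrix (Fin (d + 1)) (Fin (d + 1)) K :=
  diagonal (vecCons 1 fun _ => lam) + vecMulVec (vecCons 0 b) (Pi.single 0 1)

theorem homothetyMatrix_mulVec_vecCons (lam : K) (b : Fin d → K) (t : K) (x : Fin d → K) :
    homothetyMatrix lam b *ᵥ vecCons t x = vecCons t (lam • x + t • b) := by
  rw [homothetyMatrix, add_mulVec, vecMulVec_mulVec]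
  ext i; refine Fin.cases ?_ (fun i => ?_) i <;> simp [mulVec_diagonal]

theorem homothetyMatrix_mulVec_vecCons_zero (lam : K) (b : Fin d → K) (x : Fin d → K) :
    homothetyMatrix lam b *ᵥ vecCons 0 x = lam • vecCons 0 x := by
  rw [homothetyMatrix_mulVec_vecCons]
  ext i; refine Fin.cases ?_ (fun i => ?_) i <;> simp

theorem det_homothetyMatrix (lam : K) (b : Fin d → K) : (homothetyMatrix lam b).det = lam ^ d := by
  rw [det_eq_mul_pow_of_mulVec_vecCons_zero (homothetyMatrix_mulVec_vecCons_zero lam b),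
    homothetyMatrix, add_apply, diagonal_apply_eq, vecMulVec_apply]
  simp

theorem exists_ne_zero_det_smul_homothetyMatrix_eq_one [IsAlgClosed K] {lam : K} (hlam : lam ≠ 0)
    (b : Fin d → K) : ∃ α : K, α ≠ 0 ∧ (α • homothetyMatrix lam b).det = 1 := by
  obtain ⟨α, hα⟩ := IsAlgClosed.exists_pow_nat_eq (lam ^ d)⁻¹ d.succ_pos
  refine ⟨α, ?_, ?_⟩
  · rintro rfl
    exact inv_ne_zero (pow_ne_zero d hlam) (by rw [← hα, zero_pow d.succ_ne_zero])
  · rw [det_smul, det_homothetyMatrix, Fintype.card_fin, hα, inv_mul_cancel₀ (pow_ne_zero d hlam)]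

end Matrix

/-- On the affine chart `{v₀ ≠ 0} ≅ 𝔸ᵈ`, the subgroup of `SL(d+1, ℂ)` fixing the
hyperplane `H = {v₀ = 0}` pointwise acts exactly as the group of invertible
homothety-translations `x ↦ λ x + b`: an element fixes `H` pointwise iff it acts
on the chart by some such map, and every pair `(λ, b)` is realized by some
element fixing `H` pointwise. -/
theorem fixesHyperplane_iff_affine_homothety (d : ℕ) (hd : 1 ≤ d) :
    (∀ g : Matrix.SpecialLinearGroup (Fin (d + 1)) ℂ,
      (∀ v : Fin (d + 1) → ℂ, v 0 = 0 →
          ∃ c : ℂ, (g : Matrix (Fin (d + 1)) (Fin (d + 1)) ℂ).mulVec v = c • v) ↔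
        ∃ (lam : ℂˣ) (b : Fin d → ℂ), ∀ x : Fin d → ℂ, ∃ c : ℂ, c ≠ 0 ∧
          (g : Matrix (Fin (d + 1)) (Fin (d + 1)) ℂ).mulVec (Matrix.vecCons 1 x) =
            c • Matrix.vecCons 1 ((lam : ℂ) • x + b)) ∧
    ∀ (lam : ℂˣ) (b : Fin d → ℂ),
      ∃ g : Matrix.SpecialLinearGroup (Fin (d + 1)) ℂ,
        (∀ v : Fin (d + 1) → ℂ, v 0 = 0 →
          ∃ c : ℂ, (g : Matrix (Fin (d + 1)) (Fin (d + 1)) ℂ).mulVec v = c • v) ∧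
        ∀ x : Fin d → ℂ, ∃ c : ℂ, c ≠ 0 ∧
          (g : Matrix (Fin (d + 1)) (Fin (d + 1)) ℂ).mulVec (Matrix.vecCons 1 x) =
            c • Matrix.vecCons 1 ((lam : ℂ) • x + b) := by
  refine ⟨fun g => ⟨fun h => ?_, fun ⟨lam, b, h⟩ => ?_⟩, fun lam b => ?_⟩
  · obtain ⟨μ, hμ⟩ := (forall_exists_mulVec_eq_smul_iff _).1 h
    have hdet : (g : Matrix (Fin (d + 1)) (Fin (d + 1)) ℂ) 0 0 * μ ^ d = 1 := by
      rw [← det_eq_mul_pow_of_mulVec_vecCons_zero hμ, g.2]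
    have h0 := left_ne_zero_of_mul_eq_one hdet
    have hμ0 : μ ≠ 0 := (pow_ne_zero_iff (by omega)).1 (right_ne_zero_of_mul_eq_one hdet)
    exact ⟨Units.mk0 _ (div_ne_zero hμ0 h0), _,
      fun x => ⟨_, h0, mulVec_vecCons_one_eq_smul hμ h0 x⟩⟩
  · choose c _ hc using h
    exact (forall_exists_mulVec_eq_smul_iff _).2
      ⟨_, mulVec_vecCons_zero_eq_smul_of_mulVec_vecCons_one lam.ne_zero hc⟩
  · obtain ⟨α, hα, hdet⟩ := exists_ne_zero_det_smul_homothetyMatrix_eq_one lam.ne_zero b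
    refine ⟨⟨α • homothetyMatrix (lam : ℂ) b, hdet⟩, (forall_exists_mulVec_eq_smul_iff _).2
      ⟨α * lam, fun x => ?_⟩, fun x => ⟨α, hα, ?_⟩⟩
    · rw [smul_mulVec, homothetyMatrix_mulVec_vecCons_zero, smul_smul]
    · rw [smul_mulVec, homothetyMatrix_mulVec_vecCons, one_smul]
end

section
/- Let T be a finite simple graph on a vertex type V that is a tree (connected and acyclic), let n ≥ 4, and let m : Fin n → V be a marking of the indices by vertices. For a set S of indices, say a vertex x lies in the hull of S if there exist a, b ∈ S such that x lies on the (unique) path in T from m a to m b. Suppose K and L are disjoint sets of indices with K ∪ L = Fin n, each of cardinality at least 2, and let i₀ ∈ L be a distinguished index. If there exists a vertex x₀ lying in both the hull of K and the hull of L, then there exist an index ℓ ∈ L with ℓ ≠ i₀, indices k₁, k₂ ∈ K with k₁ ≠ k₂, and a vertex x such that x lies on the path from m k₁ to m k₂ and x lies on the path from m ℓ to m i₀. -/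
/-- `x` lies on the (unique) path in `T` from `u` to `v`: there is a path from
`u` to `v` whose support contains `x`. -/
def liesOnPath {V : Type*} (T : SimpleGraph V) (u v x : V) : Prop :=
  ∃ p : T.Walk u v, p.IsPath ∧ x ∈ p.support

/-! In a tree, the path from `u` to `v` is covered by the paths from `u` and from `v` to any
third vertex `w`. So a vertex `x` on the path between two marked points of `S` lies on the path
from some marked point `m j`, `j ∈ S`, to `m i`, for any index `i`. If `j = i` then `x = m i`,
which lies on the path from every other marked point of `S` to `m i`; so `j ≠ i` can be arranged.
Taking `i = i₀` for `L`, and `i` one of the two given indices for `K`, gives the two paths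
through `x₀`. -/

namespace SimpleGraph

variable {V : Type*} {T : SimpleGraph V} {u v w x : V}

theorem liesOnPath_symm (h : liesOnPath T u v x) : liesOnPath T v u x := by
  obtain ⟨p, hp, hx⟩ := h
  exact ⟨p.reverse, hp.reverse, by simpa using hx⟩

theorem Connected.liesOnPath_right (hT : T.Connected) (u v : V) : liesOnPath T u v v := by
  obtain ⟨p, hp⟩ := (hT u v).exists_isPath
  exact ⟨p, hp, p.end_mem_support⟩

theorem eq_of_liesOnPath_self (h : liesOnPath T u u x) : x = u := by
  obtain ⟨p, hp, hx⟩ := h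
  rw [Walk.nil_iff_support_eq.mp (Walk.isPath_iff_nil.mp hp)] at hx
  exact List.mem_singleton.mp hx

theorem IsTree.mem_support_of_liesOnPath (hT : T.IsTree) (h : liesOnPath T u v x)
    (p : T.Walk u v) : x ∈ p.support := by
  classical
  obtain ⟨q, hq, hx⟩ := h
  rw [(hT.existsUnique_path u v).unique hq p.toPath.2] at hx
  exact Walk.support_bypass_subset_support p hx

theorem IsTree.liesOnPath_or_liesOnPath (hT : T.IsTree) (h : liesOnPath T u v x) (w : V) :
    liesOnPath T u w x ∨ liesOnPath T w v x := by
  obtain ⟨p, hp⟩ := (hT.connected u w).exists_isPath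
  obtain ⟨q, hq⟩ := (hT.connected w v).exists_isPath
  have hx := hT.mem_support_of_liesOnPath h (p.append q)
  rcases (Walk.mem_support_append_iff p q).mp hx with hxp | hxq
  · exact Or.inl ⟨p, hp, hxp⟩
  · exact Or.inr ⟨q, hq, hxq⟩

variable {ι : Type*} {m : ι → V} {S : Set ι} {i : ι}

theorem exists_ne_liesOnPath_of_liesOnPath (hc : T.Connected) (hS : 1 < S.ncard) {j : ι}
    (hj : j ∈ S) (h : liesOnPath T (m j) (m i) x) :
    ∃ ℓ ∈ S, ℓ ≠ i ∧ liesOnPath T (m ℓ) (m i) x := by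
  by_cases hji : j = i
  · subst hji
    obtain ⟨ℓ, hℓ, hℓj⟩ := Set.exists_ne_of_one_lt_ncard hS j
    exact ⟨ℓ, hℓ, hℓj, eq_of_liesOnPath_self h ▸ hc.liesOnPath_right _ _⟩
  · exact ⟨j, hj, hji, h⟩

theorem IsTree.exists_ne_liesOnPath (hT : T.IsTree) (hS : 1 < S.ncard) {a b : ι}
    (ha : a ∈ S) (hb : b ∈ S) (h : liesOnPath T (m a) (m b) x) :
    ∃ ℓ ∈ S, ℓ ≠ i ∧ liesOnPath T (m ℓ) (m i) x := by
  rcases hT.liesOnPath_or_liesOnPath h (m i) with ha' | hb'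
  · exact exists_ne_liesOnPath_of_liesOnPath hT.connected hS ha ha'
  · exact exists_ne_liesOnPath_of_liesOnPath hT.connected hS hb (liesOnPath_symm hb')

end SimpleGraph

theorem tree_hull_intersection_general {V : Type*}
    (T : SimpleGraph V) (hT : T.IsTree)
    (n : ℕ) (m : Fin n → V)
    (K L : Set (Fin n))
    (hK : 2 ≤ K.ncard) (hL : 2 ≤ L.ncard)
    (i₀ : Fin n)
    (x₀ : V)
    (hx₀K : ∃ a ∈ K, ∃ b ∈ K, liesOnPath T (m a) (m b) x₀)
    (hx₀L : ∃ a ∈ L, ∃ b ∈ L, liesOnPath T (m a) (m b) x₀) :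
    ∃ ℓ ∈ L, ℓ ≠ i₀ ∧ ∃ k₁ ∈ K, ∃ k₂ ∈ K, k₁ ≠ k₂ ∧ ∃ x : V,
      liesOnPath T (m k₁) (m k₂) x ∧ liesOnPath T (m ℓ) (m i₀) x := by
  obtain ⟨a, ha, b, hb, hab⟩ := hx₀K
  obtain ⟨k, hk, hka, hkx⟩ := hT.exists_ne_liesOnPath (i := a) hK ha hb hab
  obtain ⟨c, hc, d, hd, hcd⟩ := hx₀L
  obtain ⟨ℓ, hℓ, hℓi₀, hℓx⟩ := hT.exists_ne_liesOnPath (i := i₀) hL hc hd hcd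
  exact ⟨ℓ, hℓ, hℓi₀, k, hk, a, ha, hka, x₀, hkx, hℓx⟩

/-- Key combinatorial lemma on dual trees of stable curves: if `T` is a finite
tree with a marking `m : Fin n → V`, `K ⊔ L = Fin n` is a partition into sets of
size at least `2` with a distinguished index `i₀ ∈ L`, and the hulls of `K` and
`L` share a vertex `x₀`, then there are `ℓ ∈ L \ {i₀}` and distinct `k₁, k₂ ∈ K`
such that the path from `m k₁` to `m k₂` meets the path from `m ℓ` to `m i₀`. -/
theorem tree_hull_intersection {V : Type*} [Fintype V]
    (T : SimpleGraph V) (hT : T.IsTree)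
    (n : ℕ) (hn : 4 ≤ n) (m : Fin n → V)
    (K L : Set (Fin n)) (hdisj : Disjoint K L) (hunion : K ∪ L = Set.univ)
    (hK : 2 ≤ K.ncard) (hL : 2 ≤ L.ncard)
    (i₀ : Fin n) (hi₀ : i₀ ∈ L)
    (x₀ : V)
    (hx₀K : ∃ a ∈ K, ∃ b ∈ K, liesOnPath T (m a) (m b) x₀)
    (hx₀L : ∃ a ∈ L, ∃ b ∈ L, liesOnPath T (m a) (m b) x₀) :
    ∃ ℓ ∈ L, ℓ ≠ i₀ ∧ ∃ k₁ ∈ K, ∃ k₂ ∈ K, k₁ ≠ k₂ ∧ ∃ x : V,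
      liesOnPath T (m k₁) (m k₂) x ∧ liesOnPath T (m ℓ) (m i₀) x :=
  tree_hull_intersection_general T hT n m K L hK hL i₀ x₀ hx₀K hx₀L
end
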